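/- arXiv:1002.0605 — 3 statements merged into one kernel-verified Lean document; each statement's English description precedes it below -/
import Mathlib

section
/- Let H be a countable abelian group and let G be a countable sofic group. Then the restricted wreath product H ≀ G is sofic. -/
/-!
Fix a sofic approximation `φ : G → Sym(X)` of `G` and a map `π` from `H` to a finite abelian group
`Q` that is multiplicative on the subgroup generated by the finitely many lamp values in play and
kills none of them (finitely generated abelian groups are residually finite). Then `(f, g) ∈ H ≀ G`
acts on `X × Q^X` by `(i, q) ↦ (φ g i, q · λ)`, where `λ` places the value `π (f s)` at the point
`φ (s⁻¹ g) i` for each `s`. At every `i` where `φ` is multiplicative on the finitely many products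
involved this is an honest action, and `(f, 1)` with `f ≠ 1` moves `(i, q)` as soon as the points
`φ s⁻¹ i`, `s ∈ supp f`, are distinct. Soficity of `G` makes both conditions fail only on a
proportion `O(ε)` of the points `i`.
-/

/-- A group `G` is sofic if every finite subset can be approximated, up to any `ε > 0`,
by almost-multiplicative, almost-free maps into a finite symmetric group. -/
def IsSofic (G : Type*) [Group G] : Prop :=
  ∀ (F : Finset G) (ε : ℝ), 0 < ε →
    ∃ (n : ℕ), 0 < n ∧ ∃ φ : G → Equiv.Perm (Fin n),
      φ 1 = 1 ∧
      (∀ g ∈ F, ∀ h ∈ F,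
        ((Finset.univ.filter fun i : Fin n => φ (g * h) i ≠ φ g (φ h i)).card : ℝ) ≤ ε * n) ∧
      (∀ g ∈ F, g ≠ 1 →
        ((Finset.univ.filter fun i : Fin n => φ g i = i).card : ℝ) ≤ ε * n)

/-- The subgroup `⊕_{g ∈ G} H` of `G → H` consisting of finitely supported functions
(under pointwise multiplication). -/
def FinMulSupport (G H : Type*) [Group H] : Subgroup (G → H) where
  carrier := {f | (Function.mulSupport f).Finite}
  one_mem' := by simp
  mul_mem' := by
    intro a b ha hb
    exact (ha.union hb).subset (Function.mulSupport_mul a b)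
  inv_mem' := by
    intro a ha
    simpa [Function.mulSupport_inv] using ha

/-- The shift action of `G` on `⊕_{g ∈ G} H`, given by `(g · f)(x) = f (g⁻¹ x)`. -/
def shiftAut (G H : Type*) [Group G] [Group H] : G →* MulAut (FinMulSupport G H) where
  toFun g :=
    { toFun := fun f => ⟨fun x => (f : G → H) (g⁻¹ * x), by
        show (Function.mulSupport fun x => (f : G → H) (g⁻¹ * x)).Finite
        have : (Function.mulSupport fun x => (f : G → H) (g⁻¹ * x)) =
            (fun x => g⁻¹ * x) ⁻¹' Function.mulSupport (f : G → H) := rfl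
        rw [this]
        exact f.2.preimage ((mul_right_injective g⁻¹).injOn)⟩
      invFun := fun f => ⟨fun x => (f : G → H) (g * x), by
        show (Function.mulSupport fun x => (f : G → H) (g * x)).Finite
        have : (Function.mulSupport fun x => (f : G → H) (g * x)) =
            (fun x => g * x) ⁻¹' Function.mulSupport (f : G → H) := rfl
        rw [this]
        exact f.2.preimage ((mul_right_injective g).injOn)⟩
      left_inv := by
        intro f
        ext x
        simp
      right_inv := by
        intro f
        ext x
        simp
      map_mul' := by
        intro f₁ f₂
        ext x
        rfl }
  map_one' := by
    ext f x
    simp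
  map_mul' := by
    intro g₁ g₂
    ext f x
    simp [mul_assoc]

/-- The restricted wreath product `H ≀ G`, i.e. the semidirect product
`(⊕_{g ∈ G} H) ⋊ G` for the shift action of `G`. -/
abbrev WreathProduct (H G : Type*) [Group H] [Group G] :=
  FinMulSupport G H ⋊[shiftAut G H] G

open Finset Function
open scoped Pointwise

universe u

instance CommGroup.residuallyFinite_of_fg (A : Type*) [CommGroup A] [Group.FG A] :
    Group.ResiduallyFinite A := by
  classical
  obtain ⟨r, ι, _, p, hp, k, ⟨e⟩⟩ := AddCommGroup.equiv_free_prod_directSum_zmod (Additive A)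
  have (i : ι) : NeZero (p i ^ k i) := ⟨pow_ne_zero _ (hp i).ne_zero⟩
  refine Group.residuallyFinite_of_forall_exists_finite_monoidHom.{_, 0} fun g hg => ?_
  set x := e (Additive.ofMul g)
  have hx : x ≠ 0 := by simpa [x] using hg
  by_cases hx₂ : x.2 = 0
  · obtain ⟨j, hj⟩ : ∃ j, x.1 j ≠ 0 := by
      by_contra! h
      exact hx (Prod.ext (Finsupp.ext h) hx₂)
    set m := (x.1 j).natAbs + 1
    refine ⟨Multiplicative (ZMod m), inferInstance, inferInstance,
      AddMonoidHom.toMultiplicativeRight ((Int.castAddHom (ZMod m)).comp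
        ((Finsupp.applyAddHom j).comp ((AddMonoidHom.fst _ _).comp e.toAddMonoidHom))), ?_⟩
    intro h
    have hdvd : (m : ℤ) ∣ x.1 j := (ZMod.intCast_zmod_eq_zero_iff_dvd _ m).1 h
    exact hj (Int.eq_zero_of_dvd_of_natAbs_lt_natAbs hdvd (by rw [Int.natAbs_natCast]; omega))
  · have : Finite (DirectSum ι fun i => ZMod (p i ^ k i)) :=
      inferInstanceAs (Finite (Π₀ i, ZMod (p i ^ k i)))
    exact ⟨Multiplicative _, inferInstance, inferInstance,
      AddMonoidHom.toMultiplicativeRight ((AddMonoidHom.snd _ _).comp e.toAddMonoidHom), hx₂⟩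

theorem Group.exists_finiteIndex_forall_notMem {A : Type*} [Group A] [Group.ResiduallyFinite A]
    (T : Finset A) (hT : ∀ t ∈ T, t ≠ 1) :
    ∃ K : Subgroup A, K.FiniteIndex ∧ ∀ t ∈ T, t ∉ K := by
  choose! K hK htK using fun t ht => Group.residuallyFinite_iff_exists_finiteIndex.1 ‹_› t (hT t ht)
  exact ⟨⨅ t ∈ T, K t, Subgroup.finiteIndex_iInf' K hK,
    fun t ht htK' => htK t ht (biInf_le K ht htK')⟩

/-- `H` itself may have no nontrivial finite quotient (e.g. `H = ℚ`), so `π` is only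
multiplicative on the finitely generated subgroup spanned by `T`. -/
theorem exists_finite_map_mul_on_closure {H : Type u} [CommGroup H] (T : Finset H) :
    ∃ (Q : Type u) (_ : CommGroup Q) (_ : Finite Q) (π : H → Q), π 1 = 1 ∧
      (∀ x ∈ Subgroup.closure (T : Set H), ∀ y ∈ Subgroup.closure (T : Set H),
        π (x * y) = π x * π y) ∧ ∀ t ∈ T, t ≠ 1 → π t ≠ 1 := by
  classical
  set A := Subgroup.closure (T : Set H)
  have : Group.FG A := Group.closure_finset_fg T
  obtain ⟨K, hK, hTK⟩ := Group.exists_finiteIndex_forall_notMem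
    ((T.filter (· ≠ 1)).subtype (· ∈ A)) (by simp)
  set π : H → A ⧸ K := Function.extend Subtype.val (QuotientGroup.mk' K) 1
  have hπ (x : A) : π x = x := Subtype.val_injective.extend_apply _ _ x
  refine ⟨A ⧸ K, inferInstance, inferInstance, π, hπ 1, fun x hx y hy => ?_, fun t ht ht1 => ?_⟩
  · exact (hπ (⟨x, hx⟩ * ⟨y, hy⟩)).trans (congr_arg₂ (· * ·) (hπ ⟨x, hx⟩) (hπ ⟨y, hy⟩)).symm
  · have htA : t ∈ A := Subgroup.subset_closure ht
    rw [show t = ((⟨t, htA⟩ : A) : H) from rfl, hπ, Ne, QuotientGroup.eq_one_iff]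
    exact hTK _ (by simp [ht, ht1])

section SoficApprox

variable {G X : Type*} [Group G] [Fintype X] [DecidableEq X]

def mulDefect (φ : G → Equiv.Perm X) (g h : G) : Finset X :=
  univ.filter fun i => φ (g * h) i ≠ φ g (φ h i)

structure IsSoficApprox (φ : G → Equiv.Perm X) (S : Finset G) (δ : ℝ) : Prop where
  map_one : φ 1 = 1
  card_mulDefect_le : ∀ g ∈ S, ∀ h ∈ S, (#(mulDefect φ g h) : ℝ) ≤ δ * Fintype.card X
  card_fixed_le : ∀ g ∈ S, g ≠ 1 → (#(univ.filter fun i => φ g i = i) : ℝ) ≤ δ * Fintype.card X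

theorem IsSofic.exists_isSoficApprox (hG : IsSofic G) (S : Finset G) {δ : ℝ} (hδ : 0 < δ) :
    ∃ n, 0 < n ∧ ∃ φ : G → Equiv.Perm (Fin n), IsSoficApprox φ S δ := by
  obtain ⟨n, hn, φ, h1, hmul, hfix⟩ := hG S δ hδ
  exact ⟨n, hn, φ, ⟨h1, by simpa [mulDefect] using hmul, by simpa using hfix⟩⟩

theorem IsSoficApprox.permCongr {Y : Type*} [Fintype Y] [DecidableEq Y] {φ : G → Equiv.Perm X}
    {S : Finset G} {δ : ℝ} (hφ : IsSoficApprox φ S δ) (e : X ≃ Y) :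
    IsSoficApprox (fun g => e.permCongr (φ g)) S δ := by
  refine ⟨by ext; simp [hφ.map_one], fun g hg h hh => ?_, fun g hg hg1 => ?_⟩
  · rw [← Fintype.card_congr e, card_equiv e.symm (t := mulDefect φ g h) (by simp [mulDefect])]
    exact hφ.card_mulDefect_le g hg h hh
  · rw [← Fintype.card_congr e, card_equiv e.symm (t := univ.filter fun i => φ g i = i)
      (by simp [← Equiv.eq_symm_apply])]
    exact hφ.card_fixed_le g hg hg1

theorem isSofic_of_forall_exists_isSoficApprox
    (h : ∀ (S : Finset G) (δ : ℝ), 0 < δ → ∃ (X : Type u) (_ : Fintype X) (_ : DecidableEq X)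
      (_ : Nonempty X) (φ : G → Equiv.Perm X), IsSoficApprox φ S δ) :
    IsSofic G := by
  intro S δ hδ
  obtain ⟨X, _, _, _, φ, hφ⟩ := h S δ hδ
  obtain ⟨h1, hmul, hfix⟩ := hφ.permCongr (Fintype.equivFin X)
  refine ⟨Fintype.card X, Fintype.card_pos, fun g => (Fintype.equivFin X).permCongr (φ g), h1,
    fun g hg h hh => ?_, fun g hg hg1 => ?_⟩
  · exact (hmul g hg h hh).trans_eq (by rw [Fintype.card_fin])
  · exact (hfix g hg hg1).trans_eq (by rw [Fintype.card_fin])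

end SoficApprox

theorem card_biUnion_le_card_mul_of_le {ι X : Type*} [DecidableEq X] (s : Finset ι)
    (t : ι → Finset X) {r : ℝ} (ht : ∀ i ∈ s, (#(t i) : ℝ) ≤ r) :
    (#(s.biUnion t) : ℝ) ≤ #s * r :=
  calc (#(s.biUnion t) : ℝ) ≤ ∑ i ∈ s, (#(t i) : ℝ) := mod_cast card_biUnion_le
    _ ≤ #s * r := by simpa using sum_le_card_nsmul s _ r ht

theorem card_filter_le_of_fst_mem {X Y : Type*} [Fintype X] [Fintype Y] {p : X × Y → Prop}
    [DecidablePred p] {B : Finset X} {r : ℝ}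
    (hB : (#B : ℝ) ≤ r * Fintype.card X) (hp : ∀ x, p x → x.1 ∈ B) :
    (#(univ.filter p) : ℝ) ≤ r * Fintype.card (X × Y) := by
  have : #(univ.filter p) ≤ #B * Fintype.card Y :=
    (card_le_card fun x hx => mem_product.2 ⟨hp x (mem_filter.1 hx).2, mem_univ x.2⟩).trans
      (card_product B univ).le
  calc (#(univ.filter p) : ℝ) ≤ #B * Fintype.card Y := mod_cast this
    _ ≤ r * Fintype.card X * Fintype.card Y := by gcongr
    _ = r * Fintype.card (X × Y) := by rw [Fintype.card_prod]; push_cast; ring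

section Coincidence

variable {G X : Type*} [Group G] [Fintype X] [DecidableEq X] {φ : G → Equiv.Perm X}

theorem filter_apply_eq_apply_subset (hφ1 : φ 1 = 1) (a b : G) :
    univ.filter (fun i => φ a i = φ b i) ⊆
      mulDefect φ b⁻¹ a ∪ mulDefect φ b⁻¹ b ∪ univ.filter fun i => φ (b⁻¹ * a) i = i := by
  intro i hi
  simp only [mulDefect, mem_union, mem_filter, mem_univ, true_and] at hi ⊢
  by_contra! h
  obtain ⟨⟨ha, hb⟩, hfix⟩ := h
  rw [ha, hi, ← hb, inv_mul_cancel, hφ1, Equiv.Perm.one_apply] at hfix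
  exact hfix rfl

theorem IsSoficApprox.card_filter_apply_eq_apply_le {S : Finset G} {δ : ℝ}
    (hφ : IsSoficApprox φ S δ) {a b : G} (ha : a ∈ S) (hb : b ∈ S) (hb' : b⁻¹ ∈ S)
    (hab : b⁻¹ * a ∈ S) (hne : a ≠ b) :
    (#(univ.filter fun i => φ a i = φ b i) : ℝ) ≤ 3 * δ * Fintype.card X := by
  have h₁ := hφ.card_mulDefect_le _ hb' _ ha
  have h₂ := hφ.card_mulDefect_le _ hb' _ hb
  have h₃ := hφ.card_fixed_le _ hab (by rwa [Ne, inv_mul_eq_one, eq_comm])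
  have h := (card_le_card (filter_apply_eq_apply_subset hφ.map_one a b)).trans
    ((card_union_le _ _).trans (Nat.add_le_add_right (card_union_le _ _) _))
  have h' : (#(univ.filter fun i => φ a i = φ b i) : ℝ) ≤
      #(mulDefect φ b⁻¹ a) + #(mulDefect φ b⁻¹ b) + #(univ.filter fun i => φ (b⁻¹ * a) i = i) :=
    mod_cast h
  linarith

end Coincidence

theorem hasFiniteMulSupport_mulSingle {α H Q X : Type*} [One H] [One Q] [DecidableEq X]
    {π : H → Q} (hπ1 : π 1 = 1) {f : α → H}
    (hf : HasFiniteMulSupport f) (x : α → X) :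
    HasFiniteMulSupport fun s => (Pi.mulSingle (x s) (π (f s)) : X → Q) :=
  hf.subset fun s hs h => hs (by simp [h, hπ1])

section Lamp

variable {G H Q X : Type*} [Group G] [Monoid H] [CommGroup Q] [DecidableEq X]
  {φ : G → Equiv.Perm X} {π : H → Q}

variable (φ π) in
noncomputable def lamp (f : G → H) (g : G) (i : X) : X → Q :=
  ∏ᶠ s, Pi.mulSingle (φ (s⁻¹ * g) i) (π (f s))

theorem lamp_one_left (hπ1 : π 1 = 1) (g : G) (i : X) : lamp φ π 1 g i = 1 := by
  simp [lamp, hπ1]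

theorem lamp_mul_shift (hπ1 : π 1 = 1) {f f' : G → H} (hf : HasFiniteMulSupport f)
    (hf' : HasFiniteMulSupport f') {g g' : G} {i : X}
    (hπ : ∀ s, π (f s * f' (g⁻¹ * s)) = π (f s) * π (f' (g⁻¹ * s)))
    (hi : ∀ s, f s ≠ 1 → φ (s⁻¹ * g * g') i = φ (s⁻¹ * g) (φ g' i)) :
    lamp φ π (fun s => f s * f' (g⁻¹ * s)) (g * g') i =
      lamp φ π f' g' i * lamp φ π f g (φ g' i) := by
  have hf'g : HasFiniteMulSupport fun s => f' (g⁻¹ * s) :=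
    hf'.preimage (mul_right_injective g⁻¹).injOn
  calc lamp φ π (fun s => f s * f' (g⁻¹ * s)) (g * g') i
      = ∏ᶠ s, Pi.mulSingle (φ (s⁻¹ * (g * g')) i) (π (f' (g⁻¹ * s))) *
          Pi.mulSingle (φ (s⁻¹ * g) (φ g' i)) (π (f s)) := by
        refine finprod_congr fun s => ?_
        rw [hπ, mul_comm, Pi.mulSingle_mul]
        by_cases hs : f s = 1
        · simp [hs, hπ1]
        · rw [← mul_assoc, hi s hs]
    _ = lamp φ π f' g' i * lamp φ π f g (φ g' i) := by
        rw [finprod_mul_distrib (hasFiniteMulSupport_mulSingle hπ1 hf'g _)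
          (hasFiniteMulSupport_mulSingle hπ1 hf _), lamp, lamp,
          ← finprod_comp_equiv (Equiv.mulLeft g)]
        simp [mul_assoc]

theorem lamp_one_right_ne_one (hπ1 : π 1 = 1) {f : G → H} (hf : HasFiniteMulSupport f) {s₀ : G}
    (hs₀ : π (f s₀) ≠ 1) {i : X} (hi : ∀ s ≠ s₀, f s ≠ 1 → φ s⁻¹ i ≠ φ s₀⁻¹ i) :
    lamp φ π f 1 i ≠ 1 := by
  intro h
  apply hs₀
  have := congr_fun h (φ s₀⁻¹ i)
  rwa [lamp, finprod_apply (hasFiniteMulSupport_mulSingle hπ1 hf _), finprod_eq_single _ s₀,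
    mul_one, Pi.mulSingle_eq_same] at this
  intro s hs
  by_cases hfs : f s = 1
  · simp [hfs, hπ1]
  · rw [mul_one, Pi.mulSingle_eq_of_ne (hi s hs hfs).symm]

end Lamp

section WreathPerm

variable {G H Q X : Type*} [Group G] [Group H] [CommGroup Q] [DecidableEq X]
  {φ : G → Equiv.Perm X} {π : H → Q}

variable (φ π) in
noncomputable def wreathPerm (w : WreathProduct H G) : Equiv.Perm (X × (X → Q)) :=
  Equiv.prodShear (φ w.right) fun i => Equiv.mulRight (lamp φ π w.left.1 w.right i)

theorem wreathPerm_apply (w : WreathProduct H G) (i : X) (q : X → Q) :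
    wreathPerm φ π w (i, q) = (φ w.right i, q * lamp φ π w.left.1 w.right i) :=
  rfl

theorem wreathPerm_one (hφ1 : φ 1 = 1) (hπ1 : π 1 = 1) :
    wreathPerm φ π (1 : WreathProduct H G) = 1 := by
  ext ⟨i, q⟩ <;> simp [wreathPerm_apply, hφ1, lamp_one_left hπ1]

theorem wreathPerm_mul_apply (hπ1 : π 1 = 1) {w w' : WreathProduct H G}
    (hπ : ∀ s, π (w.left.1 s * w'.left.1 (w.right⁻¹ * s)) =
      π (w.left.1 s) * π (w'.left.1 (w.right⁻¹ * s)))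
    {i : X} (hi : φ (w.right * w'.right) i = φ w.right (φ w'.right i))
    (hs : ∀ s, w.left.1 s ≠ 1 →
      φ (s⁻¹ * w.right * w'.right) i = φ (s⁻¹ * w.right) (φ w'.right i)) (q : X → Q) :
    wreathPerm φ π (w * w') (i, q) = wreathPerm φ π w (wreathPerm φ π w' (i, q)) := by
  rw [wreathPerm_apply, wreathPerm_apply, wreathPerm_apply, mul_assoc,
    ← lamp_mul_shift hπ1 w.left.2 w'.left.2 hπ hs]
  exact Prod.ext hi rfl

theorem wreathPerm_apply_eq_self_iff {w : WreathProduct H G} {i : X} {q : X → Q} :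
    wreathPerm φ π w (i, q) = (i, q) ↔ φ w.right i = i ∧ lamp φ π w.left.1 w.right i = 1 := by
  simp [wreathPerm_apply]

end WreathPerm

section WreathApprox

variable {G H Q X : Type*} [Group G] [DecidableEq G] [Group H] [CommGroup Q] [Fintype Q]
  [DecidableEq Q] [Fintype X] [DecidableEq X] {φ : G → Equiv.Perm X} {π : H → Q}
  {K P : Finset G} {δ : ℝ}

theorem IsSoficApprox.card_mulDefect_wreathPerm_le (hφ : IsSoficApprox φ (K * K) δ)
    (hK1 : 1 ∈ K) (hPK : ∀ s ∈ P, s⁻¹ ∈ K) (hπ1 : π 1 = 1) {w w' : WreathProduct H G}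
    (hg : w.right ∈ K) (hg' : w'.right ∈ K) (hP : ∀ s, w.left.1 s ≠ 1 → s ∈ P)
    (hπ : ∀ s, π (w.left.1 s * w'.left.1 (w.right⁻¹ * s)) =
      π (w.left.1 s) * π (w'.left.1 (w.right⁻¹ * s))) :
    (#(mulDefect (wreathPerm φ π) w w') : ℝ) ≤ (#P + 1) * δ * Fintype.card (X × (X → Q)) := by
  have hS (g : G) (hg : g ∈ K) : g ∈ K * K := subset_mul_left K hK1 hg
  refine card_filter_le_of_fst_mem (B := mulDefect φ w.right w'.right ∪
    P.biUnion fun s => mulDefect φ (s⁻¹ * w.right) w'.right) ?_ ?_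
  · calc (#(mulDefect φ w.right w'.right ∪
          P.biUnion fun s => mulDefect φ (s⁻¹ * w.right) w'.right) : ℝ)
        ≤ #(mulDefect φ w.right w'.right) +
          #(P.biUnion fun s => mulDefect φ (s⁻¹ * w.right) w'.right) := mod_cast card_union_le _ _
      _ ≤ δ * Fintype.card X + #P * (δ * Fintype.card X) :=
        add_le_add (hφ.card_mulDefect_le _ (hS _ hg) _ (hS _ hg'))
          (card_biUnion_le_card_mul_of_le _ _ fun s hs =>
            hφ.card_mulDefect_le _ (mul_mem_mul (hPK s hs) hg) _ (hS _ hg'))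
      _ = (#P + 1) * δ * Fintype.card X := by ring
  · rintro ⟨i, q⟩ hne
    by_contra hi
    simp only [mulDefect, mem_union, mem_biUnion, mem_filter, mem_univ, true_and, not_or,
      not_exists, not_and, not_not] at hi
    exact hne (wreathPerm_mul_apply hπ1 hπ hi.1 (fun s hs => hi.2 s (hP s hs)) q)

theorem IsSoficApprox.card_fixed_wreathPerm_le_of_right_ne_one (hφ : IsSoficApprox φ (K * K) δ)
    (hK1 : 1 ∈ K) {w : WreathProduct H G} (hg : w.right ∈ K) (hw : w.right ≠ 1) :
    (#(univ.filter fun p => wreathPerm φ π w p = p) : ℝ) ≤ δ * Fintype.card (X × (X → Q)) :=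
  card_filter_le_of_fst_mem (hφ.card_fixed_le _ (subset_mul_left K hK1 hg) hw)
    fun ⟨_, _⟩ h => by simpa using (wreathPerm_apply_eq_self_iff.1 h).1

theorem IsSoficApprox.card_fixed_wreathPerm_le_of_right_eq_one (hφ : IsSoficApprox φ (K * K) δ)
    (hδ : 0 ≤ δ) (hK1 : 1 ∈ K) (hPK : ∀ s ∈ P, s ∈ K ∧ s⁻¹ ∈ K) (hπ1 : π 1 = 1)
    {w : WreathProduct H G} (hw : w.right = 1) (hP : ∀ s, w.left.1 s ≠ 1 → s ∈ P) {s₀ : G}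
    (hs₀ : w.left.1 s₀ ≠ 1) (hπs₀ : π (w.left.1 s₀) ≠ 1) :
    (#(univ.filter fun p => wreathPerm φ π w p = p) : ℝ) ≤
      3 * #P * δ * Fintype.card (X × (X → Q)) := by
  have hS (g : G) (hg : g ∈ K) : g ∈ K * K := subset_mul_left K hK1 hg
  have hs₀P := hPK s₀ (hP s₀ hs₀)
  refine card_filter_le_of_fst_mem
    (B := (P.erase s₀).biUnion fun s => univ.filter fun i => φ s⁻¹ i = φ s₀⁻¹ i) ?_ ?_
  · calc _ ≤ #(P.erase s₀) * (3 * δ * Fintype.card X) :=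
          card_biUnion_le_card_mul_of_le _ _ fun s hs => by
            obtain ⟨hne, hsP⟩ := mem_erase.1 hs
            exact hφ.card_filter_apply_eq_apply_le (hS _ (hPK s hsP).2) (hS _ hs₀P.2)
              (by simpa using hS _ hs₀P.1) (by simpa using mul_mem_mul hs₀P.1 (hPK s hsP).2)
              (inv_injective.ne hne)
      _ ≤ #P * (3 * δ * Fintype.card X) := by gcongr; exact erase_subset _ _
      _ = 3 * #P * δ * Fintype.card X := by ring
  · rintro ⟨i, q⟩ h
    rw [wreathPerm_apply_eq_self_iff, hw] at h
    by_contra hi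
    simp only [mem_biUnion, mem_erase, mem_filter, mem_univ, true_and, not_exists, not_and] at hi
    exact lamp_one_right_ne_one hπ1 w.left.2 hπs₀ (fun s hs hfs => hi s ⟨hs, hP s hfs⟩) h.2

theorem IsSoficApprox.wreathPerm {F : Finset (WreathProduct H G)}
    (hφ : IsSoficApprox φ (K * K) δ) (hδ : 0 ≤ δ) (hK1 : 1 ∈ K) (hFK : ∀ w ∈ F, w.right ∈ K)
    (hPK : ∀ s ∈ P, s ∈ K ∧ s⁻¹ ∈ K) (hFP : ∀ w ∈ F, ∀ s, w.left.1 s ≠ 1 → s ∈ P)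
    (hπ1 : π 1 = 1) (A : Subgroup H) (hπA : ∀ x ∈ A, ∀ y ∈ A, π (x * y) = π x * π y)
    (hFA : ∀ w ∈ F, ∀ s, w.left.1 s ∈ A) (hπF : ∀ w ∈ F, ∀ s, w.left.1 s ≠ 1 → π (w.left.1 s) ≠ 1) :
    IsSoficApprox (wreathPerm φ π) F ((3 * #P + 1) * δ) where
  map_one := wreathPerm_one hφ.map_one hπ1
  card_mulDefect_le w hw w' hw' := by
    refine (hφ.card_mulDefect_wreathPerm_le hK1 (fun s hs => (hPK s hs).2) hπ1 (hFK w hw)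
      (hFK w' hw') (hFP w hw) fun s => hπA _ (hFA w hw s) _ (hFA w' hw' _)).trans ?_
    gcongr
    linarith
  card_fixed_le w hw hw1 := by
    by_cases hr : w.right = 1
    · obtain ⟨s₀, hs₀⟩ : ∃ s₀, w.left.1 s₀ ≠ 1 := by
        by_contra! h
        exact hw1 (SemidirectProduct.ext (Subtype.ext (funext h)) hr)
      refine (hφ.card_fixed_wreathPerm_le_of_right_eq_one hδ hK1 hPK hπ1 hr (hFP w hw) hs₀
        (hπF w hw s₀ hs₀)).trans ?_
      gcongr
      linarith
    · refine (hφ.card_fixed_wreathPerm_le_of_right_ne_one hK1 (hFK w hw) hr).trans ?_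
      gcongr
      linarith [mul_nonneg (Nat.cast_nonneg (α := ℝ) #P) hδ]

end WreathApprox

theorem wreathProduct_isSofic_general (H G : Type*) [CommGroup H] [Group G] (hG : IsSofic G) :
    IsSofic (WreathProduct H G) := by
  classical
  refine isSofic_of_forall_exists_isSoficApprox fun F ε hε => ?_
  obtain ⟨P, hFP⟩ : ∃ P : Finset G, ∀ w ∈ F, ∀ s, w.left.1 s ≠ 1 → s ∈ P :=
    ⟨(F.finite_toSet.biUnion fun w _ => w.left.2).toFinset, fun w hw s hs => by
      simpa using ⟨w, hw, hs⟩⟩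
  set T := (F ×ˢ P).image fun x => x.1.left.1 x.2
  obtain ⟨Q, _, _, π, hπ1, hπA, hπT⟩ := exists_finite_map_mul_on_closure T
  have : Fintype Q := Fintype.ofFinite Q
  have hFT (w) (hw : w ∈ F) (s) (hs : w.left.1 s ≠ 1) : w.left.1 s ∈ T :=
    mem_image.2 ⟨(w, s), mem_product.2 ⟨hw, hFP w hw s hs⟩, rfl⟩
  set K := insert 1 (F.image (·.right) ∪ P ∪ P⁻¹)
  obtain ⟨n, hn, φ, hφ⟩ := hG.exists_isSoficApprox (K * K) (δ := ε / (3 * #P + 1)) (by positivity)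
  refine ⟨Fin n × (Fin n → Q), inferInstance, inferInstance, ⟨(⟨0, hn⟩, 1)⟩, wreathPerm φ π, ?_⟩
  rw [← mul_div_cancel₀ ε (by positivity : (3 * #P + 1 : ℝ) ≠ 0)]
  refine hφ.wreathPerm (by positivity) (mem_insert_self 1 _)
    (fun w hw => by simp [K, mem_image_of_mem _ hw]) (fun s hs => by simp [K, hs]) hFP hπ1 _ hπA
    (fun w hw s => ?_) fun w hw s hs => hπT _ (hFT w hw s hs) hs
  by_cases hs : w.left.1 s = 1
  · exact hs ▸ one_mem _
  · exact Subgroup.subset_closure (hFT w hw s hs)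

/-- If `H` is a countable abelian group and `G` a countable sofic group, then the
restricted wreath product `H ≀ G` is sofic. -/
theorem wreathProduct_isSofic (H G : Type*) [CommGroup H] [Group G]
    [Countable H] [Countable G] (hG : IsSofic G) :
    IsSofic (WreathProduct H G) :=
  wreathProduct_isSofic_general H G hG
end

section
/- Let n be a positive integer and let v ∈ M_n(ℂ) be a matrix all of whose entries are 0 or 1 and which has exactly one entry equal to 1 in each row. Let r be the number of columns of v all of whose entries are 0. Then there exists a permutation σ of Fin n such that v and the permutation matrix P_σ differ in exactly 2r entries; in particular ‖v − P_σ‖_F² = 2r. -/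
/-!
A 0/1 matrix with exactly one `1` in each row is the incidence matrix of the graph of a map
`f : Fin n → Fin n`, and its zero columns are the points outside the range of `f`. Choosing one
preimage for each point of the range gives a set `u` on which `f` is injective with `f '' u` the
range of `f`; extend `f|u` to a permutation `τ`. Off `u` the permutation `τ` maps into the
complement of the range, so `τ` and `f` disagree on exactly `r` rows, and in each such row the
graph matrices of `f` and `τ` differ in exactly two entries.
-/

/-- The permutation matrix of `σ`: `(P_σ)_{ij} = 1` if `i = σ j`, and `0` otherwise. -/
def permMatrix (n : ℕ) (σ : Equiv.Perm (Fin n)) : Matrix (Fin n) (Fin n) ℂ :=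
  fun i j => if i = σ j then 1 else 0

open Finset

theorem exists_perm_card_filter_ne {α : Type*} [Fintype α] [DecidableEq α] (f : α → α) :
    ∃ τ : Equiv.Perm α, #{i | f i ≠ τ i} = #(univ.image f)ᶜ := by
  obtain ⟨u, -, hinj, himage⟩ :=
    exists_subset_injOn_image_eq_of_surjOn (f := f) Set.univ (univ.image f)
      (fun y hy => by simpa using hy)
  obtain ⟨g, hg⟩ := exists_equiv_extend_of_card_eq (t := univ) (by simp) (subset_univ _) hinj
  let τ : Equiv.Perm α := g.trans (Equiv.subtypeUnivEquiv mem_univ)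
  have hτ : ∀ i ∈ u, τ i = f i := hg
  have hne : ({i | f i ≠ τ i} : Finset α) = uᶜ := by
    ext i
    simp only [mem_filter, mem_univ, true_and, mem_compl]
    refine ⟨fun h hi => h (hτ i hi).symm, fun hi h => hi ?_⟩
    obtain ⟨a, ha, hfa⟩ := mem_image.mp (himage ▸ mem_image_of_mem f (mem_univ i))
    rwa [← τ.injective ((hτ a ha).trans (hfa.trans h))]
  refine ⟨τ, ?_⟩
  rw [hne, card_compl, card_compl, ← himage, card_image_of_injOn hinj]

def graphMatrix {m n R : Type*} [DecidableEq n] [Zero R] [One R] (f : m → n) : Matrix m n R :=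
  Matrix.of fun i j => if j = f i then 1 else 0

section graphMatrix

variable {m n R : Type*} [DecidableEq n]

lemma graphMatrix_apply [Zero R] [One R] (f : m → n) (i : m) (j : n) :
    graphMatrix (R := R) f i j = if j = f i then 1 else 0 :=
  rfl

lemma exists_eq_graphMatrix [Zero R] [One R] {v : Matrix m n R}
    (h01 : ∀ i j, v i j = 0 ∨ v i j = 1) (hrow : ∀ i, ∃! j, v i j = 1) :
    ∃ f : m → n, v = graphMatrix f := by
  choose f hf hf_unique using hrow
  refine ⟨f, Matrix.ext fun i j => ?_⟩
  rw [graphMatrix_apply]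
  split_ifs with h
  · exact h ▸ hf i
  · exact (h01 i j).resolve_right fun h1 => h (hf_unique i j h1)

variable [Fintype m] [Fintype n]

-- The instance argument is general because `Fin` has its own decision procedure for `∀`.
lemma filter_forall_graphMatrix_eq_zero [Zero R] [One R] [NeZero (1 : R)]
    (f : m → n) [DecidablePred fun j => ∀ i, graphMatrix (R := R) f i j = 0] :
    ({j | ∀ i, graphMatrix (R := R) f i j = 0} : Finset n) = (univ.image f)ᶜ := by
  ext j
  rw [mem_filter]
  simp [graphMatrix_apply, eq_comm]

variable [DecidableEq R]

lemma card_filter_graphMatrix_ne [DecidableEq m] [Zero R] [One R] [NeZero (1 : R)]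
    (f g : m → n) :
    #{p : m × n | graphMatrix (R := R) f p.1 p.2 ≠ graphMatrix g p.1 p.2}
      = 2 * #{i | f i ≠ g i} := by
  have hdiff : ({p : m × n | graphMatrix (R := R) f p.1 p.2 ≠ graphMatrix g p.1 p.2} : Finset _)
      = ({i | f i ≠ g i} : Finset m).biUnion fun i => {(i, f i), (i, g i)} := by
    ext ⟨i, j⟩
    rw [mem_filter]
    simp only [graphMatrix_apply, mem_univ, true_and, mem_biUnion, mem_filter, mem_insert,
      mem_singleton, Prod.mk.injEq]
    aesop
  rw [hdiff, card_biUnion, sum_congr rfl fun i hi => card_pair ?_, sum_const, smul_eq_mul,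
    mul_comm]
  · simp_all [Prod.ext_iff]
  · intro i _ i' _ hii'
    simp [hii'.symm]

lemma sum_norm_graphMatrix_sub_sq [NormedRing R] [NormOneClass R] (f g : m → n) :
    ∑ i, ∑ j, ‖graphMatrix (R := R) f i j - graphMatrix g i j‖ ^ 2
      = #{p : m × n | graphMatrix (R := R) f p.1 p.2 ≠ graphMatrix g p.1 p.2} := by
  have : Nontrivial R := NormOneClass.nontrivial
  rw [card_filter, Nat.cast_sum, Fintype.sum_prod_type]
  refine sum_congr rfl fun i _ => sum_congr rfl fun j _ => ?_
  simp only [graphMatrix_apply]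
  split_ifs <;> simp_all

end graphMatrix

lemma permMatrix_eq_graphMatrix {n : ℕ} (σ : Equiv.Perm (Fin n)) :
    permMatrix n σ = graphMatrix ⇑σ⁻¹ := by
  ext i j
  simp only [permMatrix, graphMatrix_apply, Equiv.Perm.eq_inv_iff_eq, eq_comm]

theorem exists_perm_close_to_almost_permutation_general
    (n : ℕ) (v : Matrix (Fin n) (Fin n) ℂ)
    (h01 : ∀ i j, v i j = 0 ∨ v i j = 1)
    (hrow : ∀ i, ∃! j, v i j = 1)
    (r : ℕ)
    (hr : r = (Finset.univ.filter fun j : Fin n => ∀ i, v i j = 0).card) :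
    ∃ σ : Equiv.Perm (Fin n),
      (Finset.univ.filter fun p : Fin n × Fin n =>
          v p.1 p.2 ≠ permMatrix n σ p.1 p.2).card = 2 * r ∧
      ∑ i, ∑ j, ‖v i j - permMatrix n σ i j‖ ^ 2 = 2 * r := by
  obtain ⟨f, rfl⟩ := exists_eq_graphMatrix h01 hrow
  obtain ⟨τ, hτ⟩ := exists_perm_card_filter_ne f
  have hcard : #{i | f i ≠ τ i} = r := by
    rw [hτ, hr, filter_forall_graphMatrix_eq_zero]
  refine ⟨τ⁻¹, ?_⟩
  rw [permMatrix_eq_graphMatrix, inv_inv]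
  refine ⟨by rw [card_filter_graphMatrix_ne, hcard], ?_⟩
  rw [sum_norm_graphMatrix_sub_sq, card_filter_graphMatrix_ne, hcard]
  push_cast
  ring

/-- If `v` is an `n × n` matrix with `0,1` entries and exactly one `1` in each row, and `r`
is the number of zero columns of `v`, then there is a permutation `σ` such that `v` and
`P_σ` differ in exactly `2r` entries; in particular `‖v - P_σ‖_F² = 2r`. -/
theorem exists_perm_close_to_almost_permutation
    (n : ℕ) (hn : 0 < n) (v : Matrix (Fin n) (Fin n) ℂ)
    (h01 : ∀ i j, v i j = 0 ∨ v i j = 1)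
    (hrow : ∀ i, ∃! j, v i j = 1)
    (r : ℕ)
    (hr : r = (Finset.univ.filter fun j : Fin n => ∀ i, v i j = 0).card) :
    ∃ σ : Equiv.Perm (Fin n),
      (Finset.univ.filter fun p : Fin n × Fin n =>
          v p.1 p.2 ≠ permMatrix n σ p.1 p.2).card = 2 * r ∧
      ∑ i, ∑ j, ‖v i j - permMatrix n σ i j‖ ^ 2 = 2 * r :=
  exists_perm_close_to_almost_permutation_general n v h01 hrow r hr
end

section
/- Let m be a positive integer and i : Fin m → {0,1}. Let (n_k)_{k∈ℕ} be a sequence of positive integers and, for each k, let p_{1,k}, …, p_{m,k} be permutations of Fin n_k. Assume that for every pair j ≠ j', the fraction (1/n_k)·|{ξ ∈ Fin n_k : p_{j,k}(ξ) = p_{j',k}(ξ)}| tends to 0 as k → ∞. Then (1/(n_k · 2^{n_k})) · |{(ξ, η) : ξ ∈ Fin n_k, η : Fin n_k → {0,1}, and η(p_{j,k}⁻¹(ξ)) = i_j for all j = 1, …, m}| tends to 2^{−m} as k → ∞. -/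
/-!
Fix `ξ`. When the points `(p j)⁻¹ ξ` are pairwise distinct, prescribing the values of `η` at them
leaves exactly a `2⁻ᵐ` proportion of all `η`; for the other `ξ` the proportion lies in `[0, 1]`.
Such exceptional `ξ` satisfy `(p j)⁻¹ ξ = (p j')⁻¹ ξ` for some `j ≠ j'`, which `p j` transports to
a coincidence point of `p j` and `p j'`. So the total proportion differs from `2⁻ᵐ` by at most the
sum over pairs `j ≠ j'` of the coincidence proportions, which tends to `0`.
-/

open Filter Finset Function Fintype

theorem card_filter_forall_apply_eq_mul_pow {ι α β : Type*} [Fintype ι] [Fintype α] [DecidableEq α]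
    [Fintype β] [DecidableEq β] {f : ι → α} (hf : Injective f) (i : ι → β) :
    #{η : α → β | ∀ j, η (f j) = i j} * card β ^ card ι = card β ^ card α := by
  classical
  let e : (α → β) ≃ (ι → β) × ({a // a ∉ Set.range f} → β) :=
    (Equiv.piEquivPiSubtypeProd (· ∈ Set.range f) fun _ => β).trans
      (Equiv.prodCongr ((Equiv.ofInjective f hf).arrowCongr (Equiv.refl β)).symm (Equiv.refl _))
  have he : ∀ η j, (e η).1 j = η (f j) := fun η j => rfl
  have hfiber : #{η : α → β | ∀ j, η (f j) = i j}
      = #({i} ×ˢ (univ : Finset ({a // a ∉ Set.range f} → β))) := by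
    refine card_equiv e fun η => ?_
    simp only [mem_filter, mem_univ, true_and, mem_product, mem_singleton, and_true, funext_iff, he]
  rw [hfiber, card_product, card_singleton, one_mul, card_univ, ← card_fun, ← card_fun, mul_comm,
    ← card_prod, card_congr e]

theorem card_filter_inv_apply_eq_inv_apply {α : Type*} [Fintype α] [DecidableEq α]
    (σ τ : Equiv.Perm α) :
    #{ξ | σ⁻¹ ξ = τ⁻¹ ξ} = #{η | σ η = τ η} := by
  refine card_equiv σ⁻¹ fun ξ => ?_
  simp only [mem_filter, mem_univ, true_and, Equiv.Perm.coe_inv, Equiv.apply_symm_apply]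
  rw [eq_comm]
  exact τ.symm_apply_eq

theorem card_filter_not_injective_inv_apply_le {ι α : Type*} [Fintype ι] [DecidableEq ι]
    [Fintype α] [DecidableEq α] (p : ι → Equiv.Perm α) :
    #{ξ | ¬Injective fun j => (p j)⁻¹ ξ} ≤ ∑ q ∈ univ.offDiag, #{η | p q.1 η = p q.2 η} := by
  calc #{ξ | ¬Injective fun j => (p j)⁻¹ ξ}
      ≤ #(univ.offDiag.biUnion fun q : ι × ι => {ξ | (p q.1)⁻¹ ξ = (p q.2)⁻¹ ξ}) := by
        refine card_le_card fun ξ hξ => ?_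
        obtain ⟨j, j', heq, hne⟩ := not_injective_iff.mp (mem_filter.mp hξ).2
        simpa using ⟨j, j', hne, heq⟩
    _ ≤ ∑ q ∈ univ.offDiag, #{ξ | (p q.1)⁻¹ ξ = (p q.2)⁻¹ ξ} := card_biUnion_le
    _ = ∑ q ∈ univ.offDiag, #{η | p q.1 η = p q.2 η} := by
        simp only [card_filter_inv_apply_eq_inv_apply]

theorem abs_sum_sub_card_mul_le_card_filter_ne {α : Type*} (s : Finset α) (x : α → ℝ) {a : ℝ}
    (hx : ∀ ξ ∈ s, x ξ ∈ Set.Icc 0 1) (ha : a ∈ Set.Icc 0 1) :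
    |∑ ξ ∈ s, x ξ - #s * a| ≤ #{ξ ∈ s | x ξ ≠ a} := by
  calc |∑ ξ ∈ s, x ξ - #s * a| = |∑ ξ ∈ s, (x ξ - a)| := by
        rw [sum_sub_distrib, sum_const, nsmul_eq_mul]
    _ ≤ ∑ ξ ∈ s, |x ξ - a| := abs_sum_le_sum_abs _ _
    _ ≤ ∑ ξ ∈ s, if x ξ ≠ a then (1 : ℝ) else 0 := by
        refine sum_le_sum fun ξ hξ => ?_
        split_ifs with h
        · exact abs_sub_le_iff.mpr
            ⟨by linarith [(hx ξ hξ).2, ha.1], by linarith [(hx ξ hξ).1, ha.2]⟩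
        · simp [not_not.mp h]
    _ = #{ξ ∈ s | x ξ ≠ a} := by rw [sum_boole]

theorem abs_card_filter_div_sub_inv_pow_le {ι α β : Type*} [Fintype ι] [DecidableEq ι]
    [Fintype α] [DecidableEq α] [Nonempty α] [Fintype β] [DecidableEq β] [Nonempty β]
    (p : ι → Equiv.Perm α) (i : ι → β) :
    |(#{x : α × (α → β) | ∀ j, x.2 ((p j)⁻¹ x.1) = i j} : ℝ) / (card α * card β ^ card α)
        - ((card β : ℝ) ^ card ι)⁻¹|
      ≤ ∑ q ∈ univ.offDiag, (#{ξ | p q.1 ξ = p q.2 ξ} : ℝ) / card α := by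
  set a : ℝ := ((card β : ℝ) ^ card ι)⁻¹
  let P : α → ℝ := fun ξ => #{η : α → β | ∀ j, η ((p j)⁻¹ ξ) = i j} / (card β : ℝ) ^ card α
  have hβ : (1 : ℝ) ≤ card β := by exact_mod_cast Fintype.card_pos
  have hα : (0 : ℝ) < card α := by exact_mod_cast Fintype.card_pos
  have hsum : (#{x : α × (α → β) | ∀ j, x.2 ((p j)⁻¹ x.1) = i j} : ℝ) / (card β : ℝ) ^ card α
      = ∑ ξ, P ξ := by
    simp only [P, ← sum_div, card_filter, Fintype.sum_prod_type]
    push_cast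
    rfl
  have hP : ∀ ξ ∈ univ, P ξ ∈ Set.Icc 0 1 := fun ξ _ => by
    refine ⟨by positivity, div_le_one_of_le₀ ?_ (by positivity)⟩
    exact_mod_cast (card_filter_le _ _).trans (by simp)
  have ha : a ∈ Set.Icc 0 1 := ⟨by positivity, inv_le_one_of_one_le₀ (one_le_pow₀ hβ)⟩
  have hgood : ∀ ξ, Injective (fun j => (p j)⁻¹ ξ) → P ξ = a := fun ξ hξ => by
    have hcount : (#{η : α → β | ∀ j, η ((p j)⁻¹ ξ) = i j} : ℝ) * card β ^ card ι
        = card β ^ card α := by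
      exact_mod_cast card_filter_forall_apply_eq_mul_pow hξ i
    simp only [P, a]
    rw [div_eq_iff (by positivity), ← hcount]
    field_simp
  calc _ = |∑ ξ, P ξ - #(univ : Finset α) * a| / card α := by
        rw [mul_comm, ← div_div, hsum, card_univ, div_sub' hα.ne', abs_div, abs_of_pos hα]
    _ ≤ #{ξ | P ξ ≠ a} / card α := by
        gcongr
        exact abs_sum_sub_card_mul_le_card_filter_ne univ P hP ha
    _ ≤ #{ξ | ¬Injective fun j => (p j)⁻¹ ξ} / card α := by
        gcongr with ξ
        exact hgood ξ
    _ ≤ ∑ q ∈ univ.offDiag, (#{ξ | p q.1 ξ = p q.2 ξ} : ℝ) / card α := by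
        rw [← sum_div]
        gcongr
        exact_mod_cast card_filter_not_injective_inv_apply_le p

theorem tendsto_proportion_prescribed_translates_general
    (m : ℕ) (i : Fin m → Fin 2)
    (n : ℕ → ℕ) (hn : ∀ k, 0 < n k)
    (p : (k : ℕ) → Fin m → Equiv.Perm (Fin (n k)))
    (hcoinc : ∀ j j' : Fin m, j ≠ j' →
      Tendsto (fun k =>
          ((Finset.univ.filter fun ξ : Fin (n k) => p k j ξ = p k j' ξ).card : ℝ) / n k)
        atTop (nhds 0)) :
    Tendsto (fun k =>
        ((Finset.univ.filter fun x : Fin (n k) × (Fin (n k) → Fin 2) =>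
            ∀ j : Fin m, x.2 ((p k j)⁻¹ x.1) = i j).card : ℝ) / (n k * 2 ^ n k))
      atTop (nhds (((2 : ℝ) ^ m)⁻¹)) := by
  rw [tendsto_iff_norm_sub_tendsto_zero]
  refine squeeze_zero (g := fun k => ∑ q ∈ univ.offDiag, (#{ξ | p k q.1 ξ = p k q.2 ξ} : ℝ) / n k)
    (fun _ => norm_nonneg _) (fun k => ?_) ?_
  · have : Nonempty (Fin (n k)) := Fin.pos_iff_nonempty.mp (hn k)
    simpa using abs_card_filter_div_sub_inv_pow_le (p k) i
  · simpa using tendsto_finsetSum _ fun q hq => hcoinc q.1 q.2 (mem_offDiag.mp hq).2.2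

/-- If, for each pair `j ≠ j'`, the proportion of coincidence points of `p_{j,k}` and
`p_{j',k}` tends to `0`, then the proportion of pairs `(ξ, η)` with
`η (p_{j,k}⁻¹ ξ) = i j` for all `j` tends to `2⁻ᵐ`. -/
theorem tendsto_proportion_prescribed_translates
    (m : ℕ) (hm : 0 < m) (i : Fin m → Fin 2)
    (n : ℕ → ℕ) (hn : ∀ k, 0 < n k)
    (p : (k : ℕ) → Fin m → Equiv.Perm (Fin (n k)))
    (hcoinc : ∀ j j' : Fin m, j ≠ j' →
      Tendsto (fun k =>
          ((Finset.univ.filter fun ξ : Fin (n k) => p k j ξ = p k j' ξ).card : ℝ) / n k)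
        atTop (nhds 0)) :
    Tendsto (fun k =>
        ((Finset.univ.filter fun x : Fin (n k) × (Fin (n k) → Fin 2) =>
            ∀ j : Fin m, x.2 ((p k j)⁻¹ x.1) = i j).card : ℝ) / (n k * 2 ^ n k))
      atTop (nhds (((2 : ℝ) ^ m)⁻¹)) :=
  tendsto_proportion_prescribed_translates_general m i n hn p hcoinc
end
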